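/- arXiv:1310.2575 — 2 statements merged into one kernel-verified Lean document; each statement's English description precedes it below -/
import Mathlib

section
/- Let 0 < r < 1, let u : ℝ → ℝ^{n×n}, and let E : ℝ → ℝ^{n×n} be differentiable with ‖E(s) − Iₙ‖ ≤ r for all s and satisfying Ė(s) = E(s) u(s) − u(s) E(s) for all s. Then the curve e(s) = log(E(s)) is differentiable and satisfies ė(s) = e(s) u(s) − u(s) e(s) for all s. -/
/-! The logarithm series `L X = ∑ (-1)^k/(k+1) • (X - 1)^(k+1)` is a power series of radius `1`
about `1`, so it is differentiable on the open unit ball around `1`; and it commutes with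
conjugation, `L (g X g⁻¹) = g (L X) g⁻¹`. Differentiating `t ↦ L (e^{-tw} X e^{tw})` at `t = 0`
shows that the derivative of `L` at `X` sends `X w - w X` to `(L X) w - w (L X)`. The chain rule
for `L ∘ E` then gives the claim with `w = u s`; no bound on `u` is needed because the derivative
is taken in the matrix variable. -/

open scoped Matrix.Norms.L2Operator

/-- The principal matrix logarithm, defined by the convergent series
`log X = ∑_{k=1}^∞ ((−1)^{k+1}/k) (X − I)^k` (here re-indexed over `k : ℕ`). -/
noncomputable def mlog {n : ℕ} (X : Matrix (Fin n) (Fin n) ℝ) : Matrix (Fin n) (Fin n) ℝ :=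
  ∑' k : ℕ, (((-1 : ℝ) ^ k / (k + 1)) • (X - 1) ^ (k + 1))

open FormalMultilinearSeries NormedSpace

variable {A : Type*} [NormedRing A] [NormedAlgebra ℝ A]

theorem HasFDerivAt.apply_commutator_eq_of_units_conj [CompleteSpace A] {F : A → A}
    {F' : A →L[ℝ] A} {X : A} (hF : HasFDerivAt F F' X)
    (hconj : ∀ g : Aˣ, F (g * X * ↑g⁻¹) = g * F X * ↑g⁻¹) (w : A) :
    F' (X * w - w * X) = F X * w - w * F X := by
  have hconv (x : A) : x ∈ Metric.eball (0 : A) (expSeries ℝ A).radius :=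
    (expSeries_radius_eq_top ℝ A).symm ▸ edist_lt_top _ _
  -- `exp_add_of_commute` needs a `NormedAlgebra ℚ A` instance, which is not inferred from `ℝ`.
  have hexp_add {x y : A} (h : Commute x y) :
      NormedSpace.exp (x + y) = NormedSpace.exp x * NormedSpace.exp y :=
    exp_add_of_commute_of_mem_ball (𝕂 := ℝ) h (hconv x) (hconv y)
  let g (t : ℝ) : Aˣ :=
    { val := NormedSpace.exp (t • -w)
      inv := NormedSpace.exp (t • w)
      val_inv := by
        rw [← hexp_add (((Commute.refl w).neg_left.smul_left t).smul_right t),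
          ← smul_add, neg_add_cancel, smul_zero, exp_zero]
      inv_val := by
        rw [← hexp_add (((Commute.refl w).neg_right.smul_left t).smul_right t),
          ← smul_add, add_neg_cancel, smul_zero, exp_zero] }
  have hexp (v : A) : HasDerivAt (fun t : ℝ => NormedSpace.exp (t • v)) v 0 := by
    simpa using hasDerivAt_exp_smul_const (𝕂 := ℝ) v 0
  have hconj_deriv (Y : A) :
      HasDerivAt (fun t => (g t : A) * Y * ↑(g t)⁻¹) (Y * w - w * Y) 0 := by
    have h := ((hexp (-w)).mul_const Y).mul (hexp w)
    rwa [zero_smul, zero_smul, exp_zero, mul_one, one_mul, neg_mul, neg_add_eq_sub] at h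
  have hcomp := hF.comp_hasDerivAt_of_eq (0 : ℝ) (hconj_deriv X) (by simp [g])
  refine hcomp.unique ?_
  simpa only [Function.comp_def, hconj] using hconj_deriv (F X)

noncomputable def logCoeff : ℕ → ℝ
  | 0 => 0
  | k + 1 => (-1) ^ k / (k + 1)

lemma norm_logCoeff_le_one (n : ℕ) : ‖logCoeff n‖ ≤ 1 := by
  cases n with
  | zero => simp [logCoeff]
  | succ k =>
    rw [logCoeff, norm_div, norm_pow, norm_neg, norm_one, one_pow]
    exact div_le_one_of_le₀ (by norm_cast; simp) (norm_nonneg _)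

lemma one_le_radius_ofScalars_logCoeff : 1 ≤ (ofScalars A logCoeff).radius := by
  refine ENNReal.le_of_forall_nnreal_lt fun r hr => le_radius_of_bound _ 1 fun n => ?_
  have hr_le : (r : ℝ) ≤ 1 := by exact_mod_cast hr.le
  have hcoeff : ‖ofScalars A logCoeff n‖ ≤ 1 := by
    cases n with
    | zero => simp [logCoeff]
    | succ k => exact (ofScalars_norm_le A logCoeff _ k.succ_pos).trans (norm_logCoeff_le_one _)
  exact mul_le_one₀ hcoeff (by positivity) (pow_le_one₀ r.2 hr_le)

noncomputable def logSeries (X : A) : A :=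
  ∑' k : ℕ, ((-1 : ℝ) ^ k / (k + 1)) • (X - 1) ^ (k + 1)

lemma logSeries_eq_ofScalarsSum (X : A) : logSeries X = ofScalarsSum logCoeff (X - 1) := by
  rw [ofScalars_sum_eq, ← Nat.succ_injective.tsum_eq]
  · rfl
  · intro n hn
    cases n with
    | zero => simp [logCoeff] at hn
    | succ k => exact ⟨k, rfl⟩

lemma differentiableAt_logSeries [CompleteSpace A] {X : A} (hX : ‖X - 1‖ < 1) :
    DifferentiableAt ℝ logSeries X := by
  have hp := (ofScalars A logCoeff).hasFPowerSeriesOnBall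
    (zero_lt_one.trans_le one_le_radius_ofScalars_logCoeff)
  have hmem : X - 1 ∈ Metric.eball (0 : A) (ofScalars A logCoeff).radius := by
    rw [Metric.mem_eball, edist_zero_right]
    refine lt_of_lt_of_le ?_ one_le_radius_ofScalars_logCoeff
    rwa [← ofReal_norm, ENNReal.ofReal_lt_one]
  have hd := hp.differentiableOn.differentiableAt (Metric.isOpen_eball.mem_nhds hmem)
  rw [funext logSeries_eq_ofScalarsSum]
  exact hd.comp X (differentiableAt_id.sub_const 1)

lemma logSeries_units_conj (g : Aˣ) (X : A) :
    logSeries (g * X * ↑g⁻¹) = g * logSeries X * ↑g⁻¹ := by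
  have hsub : (g : A) * X * ↑g⁻¹ - 1 = g * (X - 1) * ↑g⁻¹ := by
    simp [mul_sub, sub_mul, mul_assoc]
  simp only [logSeries_eq_ofScalarsSum, hsub, ofScalars_sum_eq, Units.conj_pow]
  calc ∑' n, logCoeff n • ((g : A) * (X - 1) ^ n * ↑g⁻¹)
      = ∑' n, ConjAct.toConjAct g • (logCoeff n • (X - 1) ^ n) := by
        simp only [ConjAct.units_smul_def, ConjAct.ofConjAct_toConjAct, mul_smul_comm,
          smul_mul_assoc]
    _ = ConjAct.toConjAct g • ∑' n, logCoeff n • (X - 1) ^ n := tsum_const_smul' _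
    _ = _ := ConjAct.units_smul_def _ _

theorem mlog_commutator_ode_general {n : ℕ} (r : ℝ) (hr1 : r < 1)
    (u : ℝ → Matrix (Fin n) (Fin n) ℝ)
    (E : ℝ → Matrix (Fin n) (Fin n) ℝ)
    (hb : ∀ s : ℝ, ‖E s - 1‖ ≤ r)
    (hode : ∀ s : ℝ, HasDerivAt E (E s * u s - u s * E s) s) :
    ∀ s : ℝ, HasDerivAt (fun τ => mlog (E τ))
      (mlog (E s) * u s - u s * mlog (E s)) s := by
  intro s
  have hlog := (differentiableAt_logSeries ((hb s).trans_lt hr1)).hasFDerivAt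
  have h := hlog.comp_hasDerivAt s (hode s)
  rwa [hlog.apply_commutator_eq_of_units_conj (logSeries_units_conj · (E s))] at h

/-- If `E` satisfies the commutator equation `Ė = E u − u E` while staying in the ball
`‖E − Iₙ‖ ≤ r < 1`, then `e = log E` satisfies `ė = e u − u e`. -/
theorem mlog_commutator_ode {n : ℕ} (r : ℝ) (hr0 : 0 < r) (hr1 : r < 1)
    (u : ℝ → Matrix (Fin n) (Fin n) ℝ)
    (E : ℝ → Matrix (Fin n) (Fin n) ℝ)
    (hb : ∀ s : ℝ, ‖E s - 1‖ ≤ r)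
    (hode : ∀ s : ℝ, HasDerivAt E (E s * u s - u s * E s) s) :
    ∀ s : ℝ, HasDerivAt (fun τ => mlog (E τ))
      (mlog (E s) * u s - u s * mlog (E s)) s :=
  mlog_commutator_ode_general r hr1 u E hb hode
end

section
/- Let a₀, a₁ ∈ ℝ, let u : ℝ → ℝ^{n×n}, and let X, x₂, X̂, x̂₂ : ℝ → ℝ^{n×n} be differentiable with X(t) invertible and ‖X(t)⁻¹ X̂(t) − Iₙ‖ < 1 for all t. Suppose that at time t the plant satisfies Ẋ(t) = X(t) x₂(t) and ẋ₂(t) = u(t), and the direct partial-state observer (with output Y = X) satisfies Ẋ̂(t) = X(t) x̂₂(t) X(t)⁻¹ X̂(t) − a₁ X̂(t) log(X(t)⁻¹ X̂(t)) and ẋ̂₂(t) = u(t) − a₀ log(X(t)⁻¹ X̂(t)). Then the errors E_l(s) = X(s)⁻¹ X̂(s) and e₂(s) = x̂₂(s) − x₂(s) are differentiable at t and satisfy Ė_l(t) = e₂(t) E_l(t) − a₁ E_l(t) log(E_l(t)) and ė₂(t) = −a₀ log(E_l(t)). -/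
open scoped Matrix.Norms.L2Operator

/-
Differentiating `X⁻¹ X̂` by the product rule and `d(X⁻¹) = -X⁻¹ Ẋ X⁻¹` gives
`Ė_l = X⁻¹ (Ẋ̂ - Ẋ X⁻¹ X̂)`. Substituting the plant and observer dynamics, the terms
`X⁻¹ X x̂₂ X⁻¹ X̂ - X⁻¹ X x₂ X⁻¹ X̂` collapse to `e₂ E_l`, and the correction term becomes
`-a₁ E_l log E_l`; the equation for `e₂` is linear.
-/

section RingInverse

variable {𝕜 R : Type*} [NontriviallyNormedField 𝕜] [NormedRing R] [HasSummableGeomSeries R]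
  [NormedAlgebra 𝕜 R]

theorem HasDerivAt.ringInverse {f : 𝕜 → R} {f' : R} {t : 𝕜} (hf : HasDerivAt f f' t)
    (ht : IsUnit (f t)) :
    HasDerivAt (fun s => Ring.inverse (f s)) (-(Ring.inverse (f t) * f' * Ring.inverse (f t))) t := by
  obtain ⟨u, hu⟩ := ht
  have h := (hasFDerivAt_ringInverse (𝕜 := 𝕜) u).comp_hasDerivAt_of_eq t hf hu
  simpa [Function.comp_def, ← hu] using h

end RingInverse

theorem HasDerivAt.matrix_inv {𝕜 m : Type*} [RCLike 𝕜] [Fintype m] [DecidableEq m]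
    {A : 𝕜 → Matrix m m 𝕜} {A' : Matrix m m 𝕜} {t : 𝕜} (hA : HasDerivAt A A' t)
    (ht : IsUnit (A t)) :
    HasDerivAt (fun s => (A s)⁻¹) (-((A t)⁻¹ * A' * (A t)⁻¹)) t := by
  simpa only [Matrix.nonsing_inv_eq_ringInverse] using hA.ringInverse ht

theorem hasDerivAt_inv_mul {𝕜 m : Type*} [RCLike 𝕜] [Fintype m] [DecidableEq m]
    {X Y : 𝕜 → Matrix m m 𝕜} {X' Y' : Matrix m m 𝕜} {t : 𝕜} (hX : HasDerivAt X X' t)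
    (hY : HasDerivAt Y Y' t) (ht : IsUnit (X t)) :
    HasDerivAt (fun s => (X s)⁻¹ * Y s) ((X t)⁻¹ * (Y' - X' * (X t)⁻¹ * Y t)) t := by
  refine ((hX.matrix_inv ht).mul hY).congr_deriv ?_
  simp only [mul_sub, neg_mul, ← mul_assoc]
  abel

theorem direct_partial_state_observer_error_general {n : ℕ} (a₀ a₁ : ℝ)
    (u X x₂ Xhat xhat₂ X' x₂' Xhat' xhat₂' : ℝ → Matrix (Fin n) (Fin n) ℝ)
    (hXd : ∀ s : ℝ, HasDerivAt X (X' s) s)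
    (hx₂d : ∀ s : ℝ, HasDerivAt x₂ (x₂' s) s)
    (hXhd : ∀ s : ℝ, HasDerivAt Xhat (Xhat' s) s)
    (hxh₂d : ∀ s : ℝ, HasDerivAt xhat₂ (xhat₂' s) s)
    (hinv : ∀ s : ℝ, IsUnit (X s))
    (t : ℝ)
    (hplant1 : X' t = X t * x₂ t)
    (hplant2 : x₂' t = u t)
    (hobs1 : Xhat' t = X t * xhat₂ t * (X t)⁻¹ * Xhat t -
      a₁ • (Xhat t * mlog ((X t)⁻¹ * Xhat t)))
    (hobs2 : xhat₂' t = u t - a₀ • mlog ((X t)⁻¹ * Xhat t)) :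
    HasDerivAt (fun s => (X s)⁻¹ * Xhat s)
      ((xhat₂ t - x₂ t) * ((X t)⁻¹ * Xhat t) -
        a₁ • (((X t)⁻¹ * Xhat t) * mlog ((X t)⁻¹ * Xhat t))) t ∧
    HasDerivAt (fun s => xhat₂ s - x₂ s) (-(a₀ • mlog ((X t)⁻¹ * Xhat t))) t := by
  have hcancel : (X t)⁻¹ * X t = 1 :=
    Matrix.nonsing_inv_mul _ ((Matrix.isUnit_iff_isUnit_det _).mp (hinv t))
  constructor
  · refine (hasDerivAt_inv_mul (hXd t) (hXhd t) (hinv t)).congr_deriv ?_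
    rw [hplant1, hobs1]
    simp only [mul_sub, mul_smul_comm, ← mul_assoc, hcancel, one_mul, sub_mul]
    abel
  · refine ((hxh₂d t).sub (hx₂d t)).congr_deriv ?_
    rw [hobs2, hplant2]
    abel

/-- Direct partial-state observer (with output `Y = X`): if at time `t` the plant satisfies
`Ẋ = X x₂`, `ẋ₂ = u` and the observer satisfies
`Ẋ̂ = X x̂₂ X⁻¹ X̂ − a₁ X̂ log(X⁻¹ X̂)`, `ẋ̂₂ = u − a₀ log(X⁻¹ X̂)`, then the errors
`E_l = X⁻¹ X̂` and `e₂ = x̂₂ − x₂` satisfy `Ė_l = e₂ E_l − a₁ E_l log E_l` and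
`ė₂ = −a₀ log E_l` at `t`. -/
theorem direct_partial_state_observer_error {n : ℕ} (a₀ a₁ : ℝ)
    (u X x₂ Xhat xhat₂ X' x₂' Xhat' xhat₂' : ℝ → Matrix (Fin n) (Fin n) ℝ)
    (hXd : ∀ s : ℝ, HasDerivAt X (X' s) s)
    (hx₂d : ∀ s : ℝ, HasDerivAt x₂ (x₂' s) s)
    (hXhd : ∀ s : ℝ, HasDerivAt Xhat (Xhat' s) s)
    (hxh₂d : ∀ s : ℝ, HasDerivAt xhat₂ (xhat₂' s) s)
    (hinv : ∀ s : ℝ, IsUnit (X s))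
    (hball : ∀ s : ℝ, ‖(X s)⁻¹ * Xhat s - 1‖ < 1)
    (t : ℝ)
    (hplant1 : X' t = X t * x₂ t)
    (hplant2 : x₂' t = u t)
    (hobs1 : Xhat' t = X t * xhat₂ t * (X t)⁻¹ * Xhat t -
      a₁ • (Xhat t * mlog ((X t)⁻¹ * Xhat t)))
    (hobs2 : xhat₂' t = u t - a₀ • mlog ((X t)⁻¹ * Xhat t)) :
    HasDerivAt (fun s => (X s)⁻¹ * Xhat s)
      ((xhat₂ t - x₂ t) * ((X t)⁻¹ * Xhat t) -
        a₁ • (((X t)⁻¹ * Xhat t) * mlog ((X t)⁻¹ * Xhat t))) t ∧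
    HasDerivAt (fun s => xhat₂ s - x₂ s) (-(a₀ • mlog ((X t)⁻¹ * Xhat t))) t :=
  direct_partial_state_observer_error_general a₀ a₁ u X x₂ Xhat xhat₂ X' x₂' Xhat' xhat₂' hXd hx₂d
    hXhd hxh₂d hinv t hplant1 hplant2 hobs1 hobs2
end
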